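/- arXiv:1106.2218 — 2 statements merged into one kernel-verified Lean document; each statement's English description precedes it below -/
import Mathlib

section
/- Let L be a semiexact reflection on a triangulated category T with unit l : Id → L. Then there exists a semiexact coreflection C on T, with counit c : C → Id, such that for every object X the morphisms c_X : CX → X and l_X : X → LX fit into a distinguished triangle CX → X → LX → ΣCX; moreover, the class of C-colocal objects coincides with the class of L-acyclic objects (those X with LX = 0) and the class of L-local objects coincides with the class of C-acyclic objects (those X with CX = 0). Conversely, every semiexact coreflection C on T arises in this way from a semiexact reflection L, and this correspondence between semiexact reflections and semiexact coreflections is bijective. -/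
/-!
Given a reflection `L` whose local objects are closed under fibres and extensions, let `CX` be
the fibre of the unit `X → LX`. Closure under extensions forces every map from `CX` to a local
object to vanish, and closure under fibres (hence under `Σ⁻¹`) makes every map from an
`L`-acyclic object to `X` lift uniquely through `CX → X`. So `C` is the coreflection onto the
`L`-acyclic objects, which form the left orthogonal of the local objects and are therefore
semilocalizing. The converse is dual, with the cofibre of the counit. Uniqueness holds because a
(co)reflection is determined up to isomorphism by its (co)local objects, and matching pins these
down as the acyclic objects of the partner.
-/

open CategoryTheory Category Limits Pretriangulated

universe v u

namespace Paper

section General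

variable {T : Type u} [Category.{v} T]

/-- A full subcategory (given by its class of objects) is closed under retracts. -/
def ClosedUnderRetracts (S : Set T) : Prop :=
  ∀ ⦃A B : T⦄, A ∈ S → (∃ (i : B ⟶ A) (r : A ⟶ B), i ≫ r = 𝟙 B) → B ∈ S

/-- A full subcategory is weakly reflective: every object admits a weak reflection into it. -/
def WeaklyReflective (S : Set T) : Prop :=
  ∀ X : T, ∃ (X' : T) (l : X ⟶ X'), X' ∈ S ∧
    ∀ ⦃Y : T⦄, Y ∈ S → ∀ f : X ⟶ Y, ∃ g : X' ⟶ Y, l ≫ g = f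

/-- A full subcategory is weakly coreflective. -/
def WeaklyCoreflective (S : Set T) : Prop :=
  ∀ X : T, ∃ (X' : T) (c : X' ⟶ X), X' ∈ S ∧
    ∀ ⦃Y : T⦄, Y ∈ S → ∀ f : Y ⟶ X, ∃ g : Y ⟶ X', g ≫ c = f

/-- A full subcategory is reflective: the inclusion has a left adjoint. -/
def ReflectiveSet (S : Set T) : Prop :=
  (ObjectProperty.ι (fun X => X ∈ S)).IsRightAdjoint

/-- A full subcategory is coreflective: the inclusion has a right adjoint. -/
def CoreflectiveSet (S : Set T) : Prop :=
  (ObjectProperty.ι (fun X => X ∈ S)).IsLeftAdjoint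

end General

/-- The data of an endofunctor together with a natural transformation from the identity
(a candidate reflection with its unit). -/
structure ReflectionData (T : Type u) [Category.{v} T] where
  L : T ⥤ T
  unit : 𝟭 T ⟶ L

/-- The data of an endofunctor together with a natural transformation to the identity
(a candidate coreflection with its counit). -/
structure CoreflectionData (T : Type u) [Category.{v} T] where
  C : T ⥤ T
  counit : C ⟶ 𝟭 T

section ReflData

variable {T : Type u} [Category.{v} T]

/-- The `L`-local objects: the essential image of `L`. -/
def ReflectionData.localObjects (R : ReflectionData T) : Set T := R.L.essImage

/-- `(L, l)` is a reflection: every morphism to an `L`-local object factors uniquely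
through the unit. -/
def ReflectionData.IsReflection (R : ReflectionData T) : Prop :=
  ∀ ⦃X W : T⦄, W ∈ R.localObjects → ∀ f : X ⟶ W,
    ∃! g : R.L.obj X ⟶ W, R.unit.app X ≫ g = f

/-- The `C`-colocal objects: the essential image of `C`. -/
def CoreflectionData.colocalObjects (Q : CoreflectionData T) : Set T := Q.C.essImage

/-- `(C, c)` is a coreflection: every morphism from a `C`-colocal object factors uniquely
through the counit. -/
def CoreflectionData.IsCoreflection (Q : CoreflectionData T) : Prop :=
  ∀ ⦃X W : T⦄, W ∈ Q.colocalObjects → ∀ f : W ⟶ X,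
    ∃! g : W ⟶ Q.C.obj X, g ≫ Q.counit.app X = f

end ReflData

section Triangulated

variable {T : Type u} [Category.{v} T] [HasZeroObject T] [Preadditive T] [HasShift T ℤ]
  [∀ n : ℤ, (shiftFunctor T n).Additive] [Pretriangulated T]

/-- Closed under fibres: the first vertex of a distinguished triangle whose second and third
vertices lie in `S` lies in `S`. -/
def ClosedUnderFibres (S : Set T) : Prop :=
  ∀ ⦃X Y Z : T⦄ (u : X ⟶ Y) (v : Y ⟶ Z) (w : Z ⟶ X⟦(1:ℤ)⟧),
    (Triangle.mk u v w ∈ distTriang T) → Y ∈ S → Z ∈ S → X ∈ S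

/-- Closed under cofibres. -/
def ClosedUnderCofibres (S : Set T) : Prop :=
  ∀ ⦃X Y Z : T⦄ (u : X ⟶ Y) (v : Y ⟶ Z) (w : Z ⟶ X⟦(1:ℤ)⟧),
    (Triangle.mk u v w ∈ distTriang T) → X ∈ S → Y ∈ S → Z ∈ S

/-- Closed under extensions. -/
def ClosedUnderExtensions (S : Set T) : Prop :=
  ∀ ⦃X Y Z : T⦄ (u : X ⟶ Y) (v : Y ⟶ Z) (w : Z ⟶ X⟦(1:ℤ)⟧),
    (Triangle.mk u v w ∈ distTriang T) → X ∈ S → Z ∈ S → Y ∈ S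

/-- `^⊥D`: objects `X` with `T(X, ΣᵏD) = 0` for all `D ∈ D` and all integers `k`. -/
def leftOrth (D : Set T) : Set T :=
  {X | ∀ ⦃E : T⦄, E ∈ D → ∀ k : ℤ, ∀ f : X ⟶ E⟦k⟧, f = 0}

/-- `D^⊥`: objects `Y` with `T(ΣᵏD, Y) = 0` for all `D ∈ D` and all integers `k`. -/
def rightOrth (D : Set T) : Set T :=
  {Y | ∀ ⦃E : T⦄, E ∈ D → ∀ k : ℤ, ∀ f : E⟦k⟧ ⟶ Y, f = 0}

/-- `⊾D`: objects `X` with `T(X, ΣᵏD) = 0` for all `D ∈ D` and all `k ≤ 0`. -/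
def leftSemiOrth (D : Set T) : Set T :=
  {X | ∀ ⦃E : T⦄, E ∈ D → ∀ k : ℤ, k ≤ 0 → ∀ f : X ⟶ E⟦k⟧, f = 0}

/-- `D⊿`: objects `Y` with `T(ΣᵏD, Y) = 0` for all `D ∈ D` and all `k ≥ 0`. -/
def rightSemiOrth (D : Set T) : Set T :=
  {Y | ∀ ⦃E : T⦄, E ∈ D → ∀ k : ℤ, 0 ≤ k → ∀ f : E⟦k⟧ ⟶ Y, f = 0}

section WithLimits

variable [HasProducts.{v} T] [HasCoproducts.{v} T]

/-- Closed under all (small) products. -/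
def ClosedUnderProducts (S : Set T) : Prop :=
  ∀ ⦃ι : Type v⦄ (f : ι → T), (∀ i, f i ∈ S) → (∏ᶜ f) ∈ S

/-- Closed under all (small) coproducts. -/
def ClosedUnderCoproducts (S : Set T) : Prop :=
  ∀ ⦃ι : Type v⦄ (f : ι → T), (∀ i, f i ∈ S) → (∐ f) ∈ S

/-- Semilocalizing: closed under coproducts, cofibres and extensions. -/
def IsSemilocalizing (S : Set T) : Prop :=
  ClosedUnderCoproducts S ∧ ClosedUnderCofibres S ∧ ClosedUnderExtensions S

/-- Semicolocalizing: closed under products, fibres and extensions. -/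
def IsSemicolocalizing (S : Set T) : Prop :=
  ClosedUnderProducts S ∧ ClosedUnderFibres S ∧ ClosedUnderExtensions S

/-- Localizing: closed under coproducts, fibres, cofibres and extensions. -/
def IsLocalizing (S : Set T) : Prop :=
  ClosedUnderCoproducts S ∧ ClosedUnderFibres S ∧ ClosedUnderCofibres S ∧
    ClosedUnderExtensions S

/-- Colocalizing: closed under products, fibres, cofibres and extensions. -/
def IsColocalizing (S : Set T) : Prop :=
  ClosedUnderProducts S ∧ ClosedUnderFibres S ∧ ClosedUnderCofibres S ∧
    ClosedUnderExtensions S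

/-- The smallest semilocalizing subcategory containing `D`. -/
def semiloc (D : Set T) : Set T := ⋂₀ {S : Set T | IsSemilocalizing S ∧ D ⊆ S}

/-- The smallest semicolocalizing subcategory containing `D`. -/
def semicoloc (D : Set T) : Set T := ⋂₀ {S : Set T | IsSemicolocalizing S ∧ D ⊆ S}

/-- The smallest localizing subcategory containing `D`. -/
def loc (D : Set T) : Set T := ⋂₀ {S : Set T | IsLocalizing S ∧ D ⊆ S}

/-- The smallest colocalizing subcategory containing `D`. -/
def coloc (D : Set T) : Set T := ⋂₀ {S : Set T | IsColocalizing S ∧ D ⊆ S}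

end WithLimits

end Triangulated


section Statements

variable {T : Type u} [Category.{v} T] [HasZeroObject T] [Preadditive T] [HasShift T ℤ]
  [∀ n : ℤ, (shiftFunctor T n).Additive] [Pretriangulated T]
  [HasProducts.{v} T] [HasCoproducts.{v} T]

/-- A reflection `L` and a coreflection `C` are matched if for every `X` the counit and the unit
fit into a distinguished triangle `CX → X → LX → ΣCX`, the `C`-colocal objects are exactly the
`L`-acyclic objects (those with `LX = 0`), and the `L`-local objects are exactly the `C`-acyclic
objects (those with `CX = 0`). -/
def Matched (R : ReflectionData T) (Q : CoreflectionData T) : Prop :=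
  (∀ X : T, ∃ w : R.L.obj X ⟶ (Q.C.obj X)⟦(1:ℤ)⟧,
      Triangle.mk (Q.counit.app X) (R.unit.app X) w ∈ distTriang T) ∧
  Q.colocalObjects = {X : T | IsZero (R.L.obj X)} ∧
  R.localObjects = {X : T | IsZero (Q.C.obj X)}

end Statements

section Categorical

variable {T : Type u} [Category.{v} T]

namespace ReflectionData

lemma L_obj_mem_localObjects (R : ReflectionData T) (X : T) : R.L.obj X ∈ R.localObjects :=
  R.L.obj_mem_essImage X

variable {R R' : ReflectionData T}

lemma IsReflection.hom_ext (hR : R.IsReflection) {X W : T} (hW : W ∈ R.localObjects)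
    {g g' : R.L.obj X ⟶ W} (h : R.unit.app X ≫ g = R.unit.app X ≫ g') : g = g' :=
  (hR hW _).unique h rfl

lemma IsReflection.mem_localObjects_iff_isIso (hR : R.IsReflection) (X : T) :
    X ∈ R.localObjects ↔ IsIso (R.unit.app X) := by
  refine ⟨fun hX => ?_, fun _ => R.L.essImage.prop_of_iso (asIso (R.unit.app X)).symm
    (R.L_obj_mem_localObjects X)⟩
  obtain ⟨r, hr, -⟩ := hR hX (𝟙 X)
  exact ⟨r, hr, hR.hom_ext (R.L_obj_mem_localObjects X) (by rw [reassoc_of% hr, comp_id])⟩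

lemma IsReflection.isZero_obj_iff_leftOrthogonal [HasZeroMorphisms T] (hR : R.IsReflection)
    (A : T) :
    IsZero (R.L.obj A) ↔ R.L.essImage.leftOrthogonal A := by
  refine ⟨fun hA W f hW => ?_, fun hA => ?_⟩
  · obtain ⟨g, rfl, -⟩ := hR hW f
    rw [hA.eq_zero_of_src g, comp_zero]
  · rw [IsZero.iff_id_eq_zero]
    refine hR.hom_ext (R.L_obj_mem_localObjects A) ?_
    rw [comp_id, comp_zero, hA (R.unit.app A) (R.L_obj_mem_localObjects A)]

lemma IsReflection.nonempty_iso (hR : R.IsReflection) (hR' : R'.IsReflection)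
    (h : R.localObjects = R'.localObjects) : Nonempty (R.L ≅ R'.L) := by
  have mem (X : T) : R'.L.obj X ∈ R.localObjects := h ▸ R'.L_obj_mem_localObjects X
  have mem' (X : T) : R.L.obj X ∈ R'.localObjects := h ▸ R.L_obj_mem_localObjects X
  have lift (X : T) : ∃ a : R.L.obj X ⟶ R'.L.obj X, R.unit.app X ≫ a = R'.unit.app X :=
    (hR (mem X) _).exists
  have lift' (X : T) : ∃ b : R'.L.obj X ⟶ R.L.obj X, R'.unit.app X ≫ b = R.unit.app X :=
    (hR' (mem' X) _).exists
  choose a ha using lift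
  choose b hb using lift'
  refine ⟨NatIso.ofComponents (fun X => ⟨a X, b X, ?_, ?_⟩) fun {X Y} f => ?_⟩
  · exact hR.hom_ext (R.L_obj_mem_localObjects X) (by simp [reassoc_of% ha, hb])
  · exact hR'.hom_ext (R'.L_obj_mem_localObjects X) (by simp [reassoc_of% hb, ha])
  · refine hR.hom_ext (mem Y) ?_
    dsimp only
    rw [← R.unit.naturality_assoc, ha]
    simpa [reassoc_of% ha] using R'.unit.naturality f

section OfUniqueExtensions

variable (P : ObjectProperty T) (F : T → T) (l : ∀ X, X ⟶ F X) (hF : ∀ X, P (F X))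
  (hl : ∀ (X : T) ⦃W : T⦄, P W → ∀ f : X ⟶ W, ∃! g : F X ⟶ W, l X ≫ g = f)

noncomputable def ofUniqueExtensions : ReflectionData T where
  L :=
    { obj := F
      map := fun {X Y} f => (hl X (hF Y) (f ≫ l Y)).exists.choose
      map_id := fun X => (hl X (hF X) (𝟙 X ≫ l X)).unique
        (hl X (hF X) _).exists.choose_spec (by simp)
      map_comp := fun {X Y Z} f g => (hl X (hF Z) ((f ≫ g) ≫ l Z)).unique
        (hl X (hF Z) _).exists.choose_spec
        (by simp only [Category.assoc, (hl Y (hF Z) (g ≫ l Z)).exists.choose_spec,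
          reassoc_of% (hl X (hF Y) (f ≫ l Y)).exists.choose_spec]) }
  unit :=
    { app := l
      naturality := fun X Y f => ((hl X (hF Y) (f ≫ l Y)).exists.choose_spec).symm }

variable [P.IsClosedUnderIsomorphisms]

lemma localObjects_ofUniqueExtensions :
    (ofUniqueExtensions P F l hF hl).localObjects = {X | P X} := by
  ext W
  refine ⟨fun ⟨X, ⟨e⟩⟩ => P.prop_of_iso e (hF X), fun hW => ?_⟩
  obtain ⟨r, hr, -⟩ := hl W hW (𝟙 W)
  have : IsIso (l W) :=
    ⟨r, hr, (hl W (hF W) (l W)).unique (by rw [reassoc_of% hr]) (comp_id _)⟩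
  exact ⟨W, ⟨(asIso (l W)).symm⟩⟩

lemma isReflection_ofUniqueExtensions : (ofUniqueExtensions P F l hF hl).IsReflection :=
  fun X _ hW f => hl X ((localObjects_ofUniqueExtensions P F l hF hl).subset hW) f

end OfUniqueExtensions

end ReflectionData

namespace CoreflectionData

lemma C_obj_mem_colocalObjects (Q : CoreflectionData T) (X : T) :
    Q.C.obj X ∈ Q.colocalObjects :=
  Q.C.obj_mem_essImage X

variable {Q Q' : CoreflectionData T}

lemma IsCoreflection.hom_ext (hQ : Q.IsCoreflection) {W X : T} (hW : W ∈ Q.colocalObjects)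
    {g g' : W ⟶ Q.C.obj X} (h : g ≫ Q.counit.app X = g' ≫ Q.counit.app X) : g = g' :=
  (hQ hW _).unique h rfl

lemma IsCoreflection.mem_colocalObjects_iff_isIso (hQ : Q.IsCoreflection) (X : T) :
    X ∈ Q.colocalObjects ↔ IsIso (Q.counit.app X) := by
  refine ⟨fun hX => ?_, fun _ => Q.C.essImage.prop_of_iso (asIso (Q.counit.app X))
    (Q.C_obj_mem_colocalObjects X)⟩
  obtain ⟨s, hs, -⟩ := hQ hX (𝟙 X)
  exact ⟨s, hQ.hom_ext (Q.C_obj_mem_colocalObjects X) (by simp [hs]), hs⟩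

lemma IsCoreflection.isZero_obj_iff_rightOrthogonal [HasZeroMorphisms T] (hQ : Q.IsCoreflection)
    (Y : T) :
    IsZero (Q.C.obj Y) ↔ Q.C.essImage.rightOrthogonal Y := by
  refine ⟨fun hY W f hW => ?_, fun hY => ?_⟩
  · obtain ⟨g, rfl, -⟩ := hQ hW f
    rw [hY.eq_zero_of_tgt g, zero_comp]
  · rw [IsZero.iff_id_eq_zero]
    refine hQ.hom_ext (Q.C_obj_mem_colocalObjects Y) ?_
    rw [id_comp, zero_comp, hY (Q.counit.app Y) (Q.C_obj_mem_colocalObjects Y)]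

lemma IsCoreflection.nonempty_iso (hQ : Q.IsCoreflection) (hQ' : Q'.IsCoreflection)
    (h : Q.colocalObjects = Q'.colocalObjects) : Nonempty (Q.C ≅ Q'.C) := by
  have mem (X : T) : Q'.C.obj X ∈ Q.colocalObjects := h ▸ Q'.C_obj_mem_colocalObjects X
  have mem' (X : T) : Q.C.obj X ∈ Q'.colocalObjects := h ▸ Q.C_obj_mem_colocalObjects X
  have lift (X : T) : ∃ a : Q.C.obj X ⟶ Q'.C.obj X, a ≫ Q'.counit.app X = Q.counit.app X :=
    (hQ' (mem' X) _).exists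
  have lift' (X : T) : ∃ b : Q'.C.obj X ⟶ Q.C.obj X, b ≫ Q.counit.app X = Q'.counit.app X :=
    (hQ (mem X) _).exists
  choose a ha using lift
  choose b hb using lift'
  refine ⟨NatIso.ofComponents (fun X => ⟨a X, b X, ?_, ?_⟩) fun {X Y} f => ?_⟩
  · exact hQ.hom_ext (Q.C_obj_mem_colocalObjects X) (by simp [hb, ha])
  · exact hQ'.hom_ext (Q'.C_obj_mem_colocalObjects X) (by simp [ha, hb])
  · refine hQ'.hom_ext (mem' X) ?_
    dsimp only
    rw [Category.assoc, Category.assoc, Q'.counit.naturality, ha]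
    simp [reassoc_of% ha]

section OfUniqueLifts

variable (P : ObjectProperty T) (F : T → T) (c : ∀ X, F X ⟶ X) (hF : ∀ X, P (F X))
  (hc : ∀ (X : T) ⦃A : T⦄, P A → ∀ f : A ⟶ X, ∃! g : A ⟶ F X, g ≫ c X = f)

noncomputable def ofUniqueLifts : CoreflectionData T where
  C :=
    { obj := F
      map := fun {X Y} f => (hc Y (hF X) (c X ≫ f)).exists.choose
      map_id := fun X => (hc X (hF X) (c X ≫ 𝟙 X)).unique
        (hc X (hF X) _).exists.choose_spec (by simp)
      map_comp := fun {X Y Z} f g => (hc Z (hF X) (c X ≫ f ≫ g)).unique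
        (hc Z (hF X) _).exists.choose_spec
        (by simp only [Category.assoc, (hc Z (hF Y) (c Y ≫ g)).exists.choose_spec,
          reassoc_of% (hc Y (hF X) (c X ≫ f)).exists.choose_spec]) }
  counit :=
    { app := c
      naturality := fun X Y f => (hc Y (hF X) (c X ≫ f)).exists.choose_spec }

variable [P.IsClosedUnderIsomorphisms]

lemma colocalObjects_ofUniqueLifts :
    (ofUniqueLifts P F c hF hc).colocalObjects = {X | P X} := by
  ext A
  refine ⟨fun ⟨X, ⟨e⟩⟩ => P.prop_of_iso e (hF X), fun hA => ?_⟩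
  obtain ⟨s, hs, -⟩ := hc A hA (𝟙 A)
  have : IsIso (c A) :=
    ⟨s, (hc A (hF A) (c A)).unique (by rw [Category.assoc, hs, comp_id]) (id_comp _), hs⟩
  exact ⟨A, ⟨(asIso (c A) : F A ≅ A)⟩⟩

lemma isCoreflection_ofUniqueLifts : (ofUniqueLifts P F c hF hc).IsCoreflection :=
  fun X _ hW f => hc X ((colocalObjects_ofUniqueLifts P F c hF hc).subset hW) f

end OfUniqueLifts

end CoreflectionData

end Categorical

section Shift

variable {T : Type u} [Category.{v} T] [Preadditive T] [HasShift T ℤ]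
  [∀ n : ℤ, (shiftFunctor T n).Additive]

lemma eq_zero_of_shift_one {X W : T} (h : ∀ g : X ⟶ W⟦(-1:ℤ)⟧, g = 0)
    (g : X⟦(1:ℤ)⟧ ⟶ W) : g = 0 := by
  apply (shiftFunctor T (-1:ℤ)).map_injective
  rw [Functor.map_zero]
  exact (cancel_epi ((shiftEquiv T (1:ℤ)).unitIso.hom.app X)).1 ((h _).trans comp_zero.symm)

lemma eq_zero_of_shift_neg_one {W Z : T} (h : ∀ g : W⟦(1:ℤ)⟧ ⟶ Z, g = 0)
    (g : W ⟶ Z⟦(-1:ℤ)⟧) : g = 0 := by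
  apply (shiftFunctor T (1:ℤ)).map_injective
  rw [Functor.map_zero]
  exact (cancel_mono ((shiftEquiv T (1:ℤ)).counitIso.hom.app Z)).1 ((h _).trans zero_comp.symm)

end Shift

section TriangulatedLemmas

variable {T : Type u} [Category.{v} T] [HasZeroObject T] [Preadditive T] [HasShift T ℤ]
  [∀ n : ℤ, (shiftFunctor T n).Additive] [Pretriangulated T]

lemma _root_.CategoryTheory.Pretriangulated.Triangle.yoneda_exact₁ (D : Triangle T)
    (hD : D ∈ distTriang T) {X : T} (f : D.obj₁ ⟶ X) (hf : D.mor₃ ≫ f⟦(1:ℤ)⟧' = 0) :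
    ∃ g : D.obj₂ ⟶ X, f = D.mor₁ ≫ g := by
  obtain ⟨g, hg⟩ : ∃ g : D.obj₂⟦(1:ℤ)⟧ ⟶ X⟦(1:ℤ)⟧,
      f⟦(1:ℤ)⟧' = (-D.mor₁⟦(1:ℤ)⟧') ≫ g :=
    Triangle.yoneda_exact₃ _ (rot_of_distTriang _ hD) _ hf
  refine ⟨-(shiftFunctor T (1:ℤ)).preimage g, (shiftFunctor T (1:ℤ)).map_injective ?_⟩
  rw [Functor.map_comp, Functor.map_neg, Functor.map_preimage, Preadditive.comp_neg,
    ← Preadditive.neg_comp, hg]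

lemma shift_neg_one_mem_of_closedUnderFibres {S : Set T} (hS : ClosedUnderFibres S) {W : T}
    (hW : W ∈ S) : W⟦(-1:ℤ)⟧ ∈ S :=
  have h0 := hS _ _ _ (contractible_distinguished₁ W) hW hW
  hS _ _ _ (inv_rot_of_distTriang _ (contractible_distinguished₁ W)) h0 hW

lemma shift_one_mem_of_closedUnderCofibres {S : Set T} (hS : ClosedUnderCofibres S) {W : T}
    (hW : W ∈ S) : W⟦(1:ℤ)⟧ ∈ S :=
  have h0 := hS _ _ _ (contractible_distinguished W) hW hW
  hS _ _ _ (rot_of_distTriang _ (contractible_distinguished W)) hW h0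

lemma isSemilocalizing_leftOrthogonal [HasCoproducts.{v} T] {P : ObjectProperty T}
    (hP : ∀ ⦃W : T⦄, P W → P (W⟦(-1:ℤ)⟧)) :
    IsSemilocalizing {X | P.leftOrthogonal X} := by
  refine ⟨fun _ f hf W g hW => Sigma.hom_ext _ _ fun i => ?_,
    fun X _ _ _ _ w hD hX hY W g hW => ?_,
    fun _ _ _ _ _ _ hD hX hZ => P.leftOrthogonal.ext_of_isTriangulatedClosed₂ _ hD hX hZ⟩
  · rw [comp_zero]
    exact hf i _ hW
  · obtain ⟨g', rfl⟩ : ∃ g' : X⟦(1:ℤ)⟧ ⟶ W, g = w ≫ g' :=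
      Triangle.yoneda_exact₃ _ hD g (hY _ hW)
    rw [eq_zero_of_shift_one (fun h => hX h (hP hW)) g', comp_zero]

lemma isSemicolocalizing_rightOrthogonal [HasProducts.{v} T] {P : ObjectProperty T}
    (hP : ∀ ⦃W : T⦄, P W → P (W⟦(1:ℤ)⟧)) :
    IsSemicolocalizing {X | P.rightOrthogonal X} := by
  refine ⟨fun _ f hf W g hW => Pi.hom_ext _ _ fun i => ?_,
    fun _ _ Z u v w hD hY hZ W g hW => ?_,
    fun _ _ _ _ _ _ hD hX hZ => P.rightOrthogonal.ext_of_isTriangulatedClosed₂ _ hD hX hZ⟩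
  · rw [zero_comp]
    exact hf i _ hW
  · obtain ⟨g', rfl⟩ :
        ∃ g' : W ⟶ Z⟦(-1:ℤ)⟧, g = g' ≫ (Triangle.mk u v w).invRotate.mor₁ :=
      Triangle.coyoneda_exact₂ _ (inv_rot_of_distTriang _ hD) g (hY _ hW)
    rw [eq_zero_of_shift_neg_one (fun h => hZ h (hP hW)) g']
    exact zero_comp

end TriangulatedLemmas

section FromReflection

variable {T : Type u} [Category.{v} T] [HasZeroObject T] [Preadditive T] [HasShift T ℤ]
  [∀ n : ℤ, (shiftFunctor T n).Additive] [Pretriangulated T]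
  {R : ReflectionData T} {X A : T} {c : A ⟶ X} {w : R.L.obj X ⟶ A⟦(1:ℤ)⟧}

lemma ReflectionData.existsUnique_lift_of_distTriang
    (hD : Triangle.mk c (R.unit.app X) w ∈ distTriang T) (hF : ClosedUnderFibres R.localObjects)
    {B : T} (hB : R.L.essImage.leftOrthogonal B)
    (f : B ⟶ X) : ∃! g : B ⟶ A, g ≫ c = f := by
  obtain ⟨g, hg⟩ : ∃ g : B ⟶ A, f = g ≫ c :=
    Triangle.coyoneda_exact₂ _ hD f (hB _ (R.L_obj_mem_localObjects X))
  refine ⟨g, hg.symm, fun g' hg' => sub_eq_zero.1 ?_⟩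
  obtain ⟨φ, hφ⟩ : ∃ φ : B ⟶ (R.L.obj X)⟦(-1:ℤ)⟧,
      g' - g = φ ≫ (Triangle.mk c (R.unit.app X) w).invRotate.mor₁ :=
    Triangle.coyoneda_exact₂ _ (inv_rot_of_distTriang _ hD) (g' - g)
      (show (g' - g) ≫ c = 0 by rw [Preadditive.sub_comp, hg', ← hg, sub_self])
  rw [hφ, hB φ (shift_neg_one_mem_of_closedUnderFibres hF (R.L_obj_mem_localObjects X))]
  exact zero_comp

lemma ReflectionData.IsReflection.eq_zero_of_unit_comp
    (hR : R.IsReflection) (hE : ClosedUnderExtensions R.localObjects)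
    {W : T} (hW : W ∈ R.localObjects) (g : R.L.obj X ⟶ W⟦(1:ℤ)⟧)
    (hg : R.unit.app X ≫ g = 0) : g = 0 := by
  -- In the triangle `W → E → LX → ΣW` ending in `g`, the object `E` is local, and the
  -- reflection splits `E → LX`, which `g` kills.
  obtain ⟨E, i, p, hD⟩ := distinguished_cocone_triangle₂ g
  have hEloc : E ∈ R.localObjects := hE _ _ _ hD hW (R.L_obj_mem_localObjects X)
  obtain ⟨h, hh⟩ : ∃ h : X ⟶ E, R.unit.app X = h ≫ p :=
    Triangle.coyoneda_exact₃ _ hD _ hg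
  obtain ⟨h', rfl, -⟩ := hR hEloc h
  have hsec : h' ≫ p = 𝟙 (R.L.obj X) :=
    hR.hom_ext (R.L_obj_mem_localObjects X) (by rw [comp_id, ← assoc, ← hh])
  have hpg : p ≫ g = 0 := comp_distTriang_mor_zero₂₃ _ hD
  rw [← id_comp g, ← hsec, assoc, hpg, comp_zero]

lemma ReflectionData.IsReflection.leftOrthogonal_of_distTriang
    (hR : R.IsReflection) (hE : ClosedUnderExtensions R.localObjects)
    (hD : Triangle.mk c (R.unit.app X) w ∈ distTriang T) : R.L.essImage.leftOrthogonal A := by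
  intro W f hW
  have h₁₂ : c ≫ R.unit.app X = 0 := comp_distTriang_mor_zero₁₂ _ hD
  have h₂₃ : R.unit.app X ≫ w = 0 := comp_distTriang_mor_zero₂₃ _ hD
  have hf : w ≫ f⟦(1:ℤ)⟧' = 0 := hR.eq_zero_of_unit_comp hE hW _
    (by rw [← assoc, h₂₃, zero_comp])
  obtain ⟨k, rfl⟩ : ∃ k : X ⟶ W, f = c ≫ k := Triangle.yoneda_exact₁ _ hD f hf
  obtain ⟨k', rfl, -⟩ := hR hW k
  rw [reassoc_of% h₁₂, zero_comp]

end FromReflection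

section FromCoreflection

variable {T : Type u} [Category.{v} T] [HasZeroObject T] [Preadditive T] [HasShift T ℤ]
  [∀ n : ℤ, (shiftFunctor T n).Additive] [Pretriangulated T]
  {Q : CoreflectionData T} {X B : T} {l : X ⟶ B} {v : B ⟶ (Q.C.obj X)⟦(1:ℤ)⟧}

lemma CoreflectionData.existsUnique_extension_of_distTriang
    (hD : Triangle.mk (Q.counit.app X) l v ∈ distTriang T)
    (hC : ClosedUnderCofibres Q.colocalObjects) {Y : T} (hY : Q.C.essImage.rightOrthogonal Y)
    (f : X ⟶ Y) : ∃! g : B ⟶ Y, l ≫ g = f := by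
  obtain ⟨g, hg⟩ : ∃ g : B ⟶ Y, f = l ≫ g :=
    Triangle.yoneda_exact₂ _ hD f (hY _ (Q.C_obj_mem_colocalObjects X))
  refine ⟨g, hg.symm, fun g' hg' => sub_eq_zero.1 ?_⟩
  obtain ⟨ψ, hψ⟩ : ∃ ψ : (Q.C.obj X)⟦(1:ℤ)⟧ ⟶ Y, g' - g = v ≫ ψ :=
    Triangle.yoneda_exact₃ _ hD (g' - g)
      (show l ≫ (g' - g) = 0 by rw [Preadditive.comp_sub, hg', ← hg, sub_self])
  rw [hψ, hY ψ (shift_one_mem_of_closedUnderCofibres hC (Q.C_obj_mem_colocalObjects X)),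
    comp_zero]

lemma CoreflectionData.IsCoreflection.eq_zero_of_comp_counit
    (hQ : Q.IsCoreflection) (hE : ClosedUnderExtensions Q.colocalObjects)
    {W : T} (hW : W ∈ Q.colocalObjects) (g : W ⟶ (Q.C.obj X)⟦(1:ℤ)⟧)
    (hg : g ≫ (Q.counit.app X)⟦(1:ℤ)⟧' = 0) : g = 0 := by
  obtain ⟨E, i, p, hD⟩ := distinguished_cocone_triangle₂ g
  have hEcol : E ∈ Q.colocalObjects := hE _ _ _ hD (Q.C_obj_mem_colocalObjects X) hW
  obtain ⟨h, hh⟩ : ∃ h : E ⟶ X, Q.counit.app X = i ≫ h :=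
    Triangle.yoneda_exact₁ _ hD _ hg
  obtain ⟨h', rfl, -⟩ := hQ hEcol h
  have hret : i ≫ h' = 𝟙 (Q.C.obj X) :=
    hQ.hom_ext (Q.C_obj_mem_colocalObjects X) (by rw [id_comp, assoc, ← hh])
  have hgi : g ≫ i⟦(1:ℤ)⟧' = 0 := comp_distTriang_mor_zero₃₁ _ hD
  rw [← comp_id g, ← (shiftFunctor T (1:ℤ)).map_id, ← hret, Functor.map_comp,
    reassoc_of% hgi, zero_comp]

lemma CoreflectionData.IsCoreflection.rightOrthogonal_of_distTriang
    (hQ : Q.IsCoreflection) (hE : ClosedUnderExtensions Q.colocalObjects)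
    (hD : Triangle.mk (Q.counit.app X) l v ∈ distTriang T) : Q.C.essImage.rightOrthogonal B := by
  intro W f hW
  have h₁₂ : Q.counit.app X ≫ l = 0 := comp_distTriang_mor_zero₁₂ _ hD
  have h₃₁ : v ≫ (Q.counit.app X)⟦(1:ℤ)⟧' = 0 := comp_distTriang_mor_zero₃₁ _ hD
  have hf : f ≫ v = 0 := hQ.eq_zero_of_comp_counit hE hW _
    (by rw [assoc, h₃₁, comp_zero])
  obtain ⟨k, rfl⟩ : ∃ k : W ⟶ X, f = k ≫ l := Triangle.coyoneda_exact₃ _ hD f hf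
  obtain ⟨k', rfl, -⟩ := hQ hW k
  rw [assoc, h₁₂, comp_zero]

end FromCoreflection

section MatchedExistence

variable {T : Type u} [Category.{v} T] [HasZeroObject T] [Preadditive T] [HasShift T ℤ]
  [∀ n : ℤ, (shiftFunctor T n).Additive] [Pretriangulated T]

theorem exists_matched_coreflection [HasCoproducts.{v} T] {R : ReflectionData T}
    (hR : R.IsReflection) (hF : ClosedUnderFibres R.localObjects)
    (hE : ClosedUnderExtensions R.localObjects) :
    ∃ Q : CoreflectionData T, Q.IsCoreflection ∧ IsSemilocalizing Q.colocalObjects ∧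
      Matched R Q := by
  have fiber (X : T) : ∃ (A : T) (c : A ⟶ X) (w : R.L.obj X ⟶ A⟦(1:ℤ)⟧),
      Triangle.mk c (R.unit.app X) w ∈ distTriang T :=
    distinguished_cocone_triangle₁ _
  choose F c w hD using fiber
  have hFP (X : T) := hR.leftOrthogonal_of_distTriang hE (hD X)
  have hc : ∀ (X : T) ⦃B : T⦄, R.L.essImage.leftOrthogonal B →
      ∀ f : B ⟶ X, ∃! g : B ⟶ F X, g ≫ c X = f :=
    fun X _ => ReflectionData.existsUnique_lift_of_distTriang (hD X) hF
  have hQ := CoreflectionData.colocalObjects_ofUniqueLifts _ F c hFP hc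
  refine ⟨_, CoreflectionData.isCoreflection_ofUniqueLifts _ F c hFP hc,
    hQ ▸ isSemilocalizing_leftOrthogonal fun _ => shift_neg_one_mem_of_closedUnderFibres hF,
    fun X => ⟨w X, hD X⟩, hQ.trans ?_, ?_⟩
  · ext A
    exact (hR.isZero_obj_iff_leftOrthogonal A).symm
  · ext X
    exact (hR.mem_localObjects_iff_isIso X).trans (Triangle.isZero₁_iff_isIso₂ _ (hD X)).symm

theorem exists_matched_reflection [HasProducts.{v} T] {Q : CoreflectionData T}
    (hQ : Q.IsCoreflection) (hC : ClosedUnderCofibres Q.colocalObjects)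
    (hE : ClosedUnderExtensions Q.colocalObjects) :
    ∃ R : ReflectionData T, R.IsReflection ∧ IsSemicolocalizing R.localObjects ∧
      Matched R Q := by
  have cofiber (X : T) : ∃ (B : T) (l : X ⟶ B) (v : B ⟶ (Q.C.obj X)⟦(1:ℤ)⟧),
      Triangle.mk (Q.counit.app X) l v ∈ distTriang T :=
    distinguished_cocone_triangle _
  choose F l v hD using cofiber
  have hFP (X : T) := hQ.rightOrthogonal_of_distTriang hE (hD X)
  have hl : ∀ (X : T) ⦃Y : T⦄, Q.C.essImage.rightOrthogonal Y →
      ∀ f : X ⟶ Y, ∃! g : F X ⟶ Y, l X ≫ g = f :=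
    fun X _ => CoreflectionData.existsUnique_extension_of_distTriang (hD X) hC
  have hR := ReflectionData.localObjects_ofUniqueExtensions _ F l hFP hl
  refine ⟨_, ReflectionData.isReflection_ofUniqueExtensions _ F l hFP hl,
    hR ▸ isSemicolocalizing_rightOrthogonal fun _ => shift_one_mem_of_closedUnderCofibres hC,
    fun X => ⟨v X, hD X⟩, ?_, hR.trans ?_⟩
  · ext X
    exact (hQ.mem_colocalObjects_iff_isIso X).trans (Triangle.isZero₃_iff_isIso₁ _ (hD X)).symm
  · ext Y
    exact (hQ.isZero_obj_iff_rightOrthogonal Y).symm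

end MatchedExistence

section Statements

variable {T : Type u} [Category.{v} T] [HasZeroObject T] [Preadditive T] [HasShift T ℤ]
  [∀ n : ℤ, (shiftFunctor T n).Additive] [Pretriangulated T]
  [HasProducts.{v} T] [HasCoproducts.{v} T]

/-- Every semiexact reflection `L` gives rise to a semiexact coreflection `C` with
distinguished triangles `CX → X → LX → ΣCX`, the `C`-colocal objects being the `L`-acyclics and
the `L`-local objects being the `C`-acyclics; conversely, every semiexact coreflection arises
this way, and the correspondence is bijective (up to isomorphism of the functors involved). -/
theorem statement4 :
    (∀ R : ReflectionData T, R.IsReflection → IsSemicolocalizing R.localObjects →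
      ∃ Q : CoreflectionData T, Q.IsCoreflection ∧ IsSemilocalizing Q.colocalObjects ∧
        Matched R Q) ∧
    (∀ Q : CoreflectionData T, Q.IsCoreflection → IsSemilocalizing Q.colocalObjects →
      ∃ R : ReflectionData T, R.IsReflection ∧ IsSemicolocalizing R.localObjects ∧
        Matched R Q) ∧
    (∀ (R : ReflectionData T) (Q Q' : CoreflectionData T), R.IsReflection →
      IsSemicolocalizing R.localObjects → Q.IsCoreflection → Q'.IsCoreflection →
      Matched R Q → Matched R Q' → Nonempty (Q.C ≅ Q'.C)) ∧
    (∀ (R R' : ReflectionData T) (Q : CoreflectionData T), R.IsReflection → R'.IsReflection →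
      Q.IsCoreflection → IsSemilocalizing Q.colocalObjects →
      Matched R Q → Matched R' Q → Nonempty (R.L ≅ R'.L)) :=
  ⟨fun _ hR hS => exists_matched_coreflection hR hS.2.1 hS.2.2,
    fun _ hQ hS => exists_matched_reflection hQ hS.2.1 hS.2.2,
    fun _ _ _ _ _ hQ hQ' hM hM' => hQ.nonempty_iso hQ' (hM.2.1.trans hM'.2.1.symm),
    fun _ _ _ hR hR' _ _ hM hM' => hR.nonempty_iso hR' (hM.2.2.trans hM'.2.2.symm)⟩

end Statements

end Paper
end

section
/- Let T be a category with (small) products in which idempotents split. Let L be a weakly reflective full subcategory of T that is closed under retracts, and assume that every pair of parallel arrows between objects of L has a weak equalizer that lies in L. Then L is reflective (the inclusion L → T has a left adjoint). -/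
open CategoryTheory Category Limits Pretriangulated

universe v u

namespace Paper

/-! Freyd's argument. Given a weak reflection `l : X ⟶ X'`, a weak equalizer `w : E ⟶ X'` in `S`
of all endomorphisms of `X'` fixing `l` yields a weak reflection `m : X ⟶ E` together with an
idempotent of `E` that absorbs every endomorphism fixing `m`. Splitting it gives a rigid weak
reflection (the identity is its only endomorphism fixing it), and weak equalizers make
factorizations through a rigid weak reflection unique. -/

section Reflections

variable {T : Type u} [Category.{v} T] (S : Set T)

def IsWeakReflection {X R : T} (u : X ⟶ R) : Prop :=
  R ∈ S ∧ ∀ ⦃Y : T⦄, Y ∈ S → ∀ f : X ⟶ Y, ∃ g : R ⟶ Y, u ≫ g = f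

def IsReflectionArrow {X R : T} (u : X ⟶ R) : Prop :=
  R ∈ S ∧ ∀ ⦃Y : T⦄, Y ∈ S → ∀ f : X ⟶ Y, ∃! g : R ⟶ Y, u ≫ g = f

def HasWeakEqualizersIn : Prop :=
  ∀ ⦃A B : T⦄, A ∈ S → B ∈ S → ∀ f g : A ⟶ B,
    ∃ (E : T) (w : E ⟶ A), E ∈ S ∧ w ≫ f = w ≫ g ∧
      ∀ ⦃Y : T⦄ (h : Y ⟶ A), h ≫ f = h ≫ g → ∃ k : Y ⟶ E, k ≫ w = h

variable {S}

/-- Given `g, g'` agreeing after `u`, lifting `u` through their weak equalizer `v` and back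
gives `k'` with `u ≫ k' ≫ v = u`, so rigidity makes `k' ≫ v = 𝟙`. -/
theorem IsWeakReflection.isReflectionArrow_of_rigid (hwe : HasWeakEqualizersIn S) {X R : T}
    {u : X ⟶ R} (hu : IsWeakReflection S u) (hrigid : ∀ h : R ⟶ R, u ≫ h = u → h = 𝟙 R) :
    IsReflectionArrow S u := by
  refine ⟨hu.1, fun Y hY f => ?_⟩
  obtain ⟨g, hg⟩ := hu.2 hY f
  refine ⟨g, hg, fun g' hg' => ?_⟩
  obtain ⟨E, v, hE, hv, hvlift⟩ := hwe hu.1 hY g' g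
  obtain ⟨k, hk⟩ := hvlift u (by rw [hg, hg'])
  obtain ⟨k', hk'⟩ := hu.2 hE k
  have hsection : k' ≫ v = 𝟙 R := hrigid _ (by rw [← assoc, hk', hk])
  calc g' = (k' ≫ v) ≫ g' := by rw [hsection, id_comp]
    _ = (k' ≫ v) ≫ g := by rw [assoc, hv, ← assoc]
    _ = g := by rw [hsection, id_comp]

theorem IsWeakReflection.exists_rigid_of_absorbing [IsIdempotentComplete T]
    (hretr : ClosedUnderRetracts S) {X E : T} {m : X ⟶ E} (hm : IsWeakReflection S m)
    (c : E ⟶ E) (hmc : m ≫ c = m) (habsorb : ∀ h : E ⟶ E, m ≫ h = m → c ≫ h ≫ c = c) :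
    ∃ (R : T) (u : X ⟶ R), IsWeakReflection S u ∧ ∀ h : R ⟶ R, u ≫ h = u → h = 𝟙 R := by
  have hidem : c ≫ c = c := by simpa using habsorb (𝟙 E) (comp_id m)
  obtain ⟨R, i, r, hir, hri⟩ := IsIdempotentComplete.idempotents_split E c hidem
  have hic : i ≫ c = i := by rw [← hri, ← assoc, hir, id_comp]
  have hcr : c ≫ r = r := by rw [← hri, assoc, hir, comp_id]
  have hmri : m ≫ r ≫ i = m := by rw [hri, hmc]
  refine ⟨R, m ≫ r, ⟨hretr hm.1 ⟨i, r, hir⟩, fun Y hY f => ?_⟩, fun h hh => ?_⟩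
  · obtain ⟨g, hg⟩ := hm.2 hY f
    exact ⟨i ≫ g, by rw [assoc, reassoc_of% hmri, hg]⟩
  · have hfix : c ≫ (r ≫ h ≫ i) ≫ c = c :=
      habsorb _ (by rw [← assoc, ← assoc, hh, assoc, hmri])
    calc h = (i ≫ c) ≫ (r ≫ h ≫ i) ≫ (c ≫ r) := by
          rw [hic, hcr]; simp only [assoc, reassoc_of% hir, hir, comp_id]
      _ = i ≫ r := by simp only [assoc] at hfix ⊢; rw [reassoc_of% hfix, hcr]
      _ = 𝟙 R := hir

/-- `w` weakly equalizes the diagonal and the tuple of all fixers `X' ⟶ ∏ X'`, composed with a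
weak reflection of the product so that the weak equalizer may be taken in `S`. -/
theorem exists_lift_equalizing_fixers [HasProducts.{v} T] (hweak : WeaklyReflective S)
    (hwe : HasWeakEqualizersIn S) {X X' : T} (l : X ⟶ X') (hX' : X' ∈ S) :
    ∃ (E : T) (w : E ⟶ X') (m : X ⟶ E), E ∈ S ∧ m ≫ w = l ∧
      ∀ e : X' ⟶ X', l ≫ e = l → w ≫ e = w := by
  let fixers := {e : X' ⟶ X' // l ≫ e = l}
  let q : X' ⟶ ∏ᶜ fun _ : fixers => X' := Pi.lift fun e => e.1
  let d : X' ⟶ ∏ᶜ fun _ : fixers => X' := Pi.lift fun _ => 𝟙 X'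
  obtain ⟨P', p, hP', hp⟩ := hweak (∏ᶜ fun _ : fixers => X')
  obtain ⟨E, w, hE, hw, hwlift⟩ := hwe hX' hP' (q ≫ p) (d ≫ p)
  have hlqd : l ≫ q = l ≫ d := Pi.hom_ext _ _ fun e => by simpa [q, d] using e.2
  obtain ⟨m, hm⟩ := hwlift l (by rw [reassoc_of% hlqd])
  refine ⟨E, w, m, hE, hm, fun e he => ?_⟩
  obtain ⟨πe, hπe⟩ := hp hX' (Pi.π _ (⟨e, he⟩ : fixers))
  simpa [q, d, hπe] using congrArg (· ≫ πe) hw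

theorem exists_isReflectionArrow [HasProducts.{v} T] [IsIdempotentComplete T]
    (hweak : WeaklyReflective S) (hretr : ClosedUnderRetracts S) (hwe : HasWeakEqualizersIn S)
    (X : T) : ∃ (R : T) (u : X ⟶ R), IsReflectionArrow S u := by
  obtain ⟨X', l, hl⟩ := hweak X
  obtain ⟨E, w, m, hE, hmw, hw⟩ := exists_lift_equalizing_fixers hweak hwe l hl.1
  obtain ⟨s, hs⟩ := hl.2 hE m
  have hm : IsWeakReflection S m := ⟨hE, fun Y hY f => by
    obtain ⟨g, hg⟩ := hl.2 hY f
    exact ⟨w ≫ g, by rw [reassoc_of% hmw, hg]⟩⟩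
  obtain ⟨R, u, hu, hrigid⟩ := hm.exists_rigid_of_absorbing hretr (w ≫ s)
    (by rw [reassoc_of% hmw, hs]) fun h hh => by
      have := hw (s ≫ h ≫ w) (by rw [reassoc_of% hs, reassoc_of% hh, hmw])
      simp only [assoc] at this ⊢
      rw [reassoc_of% this]
  exact ⟨R, u, hu.isReflectionArrow_of_rigid hwe hrigid⟩

theorem reflectiveSet_of_forall_isReflectionArrow
    (h : ∀ X : T, ∃ (R : T) (u : X ⟶ R), IsReflectionArrow S u) : ReflectiveSet S := by
  have (X : T) : HasInitial (StructuredArrow X (ObjectProperty.ι fun X => X ∈ S)) := by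
    obtain ⟨R, u, hR, hu⟩ := h X
    let R' : ObjectProperty.FullSubcategory fun X => X ∈ S := ⟨R, hR⟩
    choose g hg huniq using fun (Y : StructuredArrow X (ObjectProperty.ι fun X => X ∈ S)) =>
      hu Y.right.2 Y.hom
    exact IsInitial.hasInitial (X := StructuredArrow.mk (Y := R') u)
      (IsInitial.ofUniqueHom (fun Y => StructuredArrow.homMk (ObjectProperty.homMk (g Y)) (hg Y))
        fun Y η => StructuredArrow.hom_ext _ _ (ObjectProperty.hom_ext _
          (huniq Y _ (StructuredArrow.w η))))
  exact isRightAdjointOfStructuredArrowInitials _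

end Reflections

/-- Let `T` be a category with products in which idempotents split. If `L` is a
weakly reflective full subcategory closed under retracts such that every pair of parallel
arrows between objects of `L` has a weak equalizer lying in `L`, then `L` is reflective. -/
theorem statement12 {T : Type u} [Category.{v} T] [HasProducts.{v} T]
    [IsIdempotentComplete T] (S : Set T)
    (hweak : WeaklyReflective S) (hretr : ClosedUnderRetracts S)
    (hwe : ∀ ⦃A B : T⦄, A ∈ S → B ∈ S → ∀ f g : A ⟶ B,
        ∃ (E : T) (w : E ⟶ A), E ∈ S ∧ w ≫ f = w ≫ g ∧
          ∀ ⦃Y : T⦄ (h : Y ⟶ A), h ≫ f = h ≫ g → ∃ k : Y ⟶ E, k ≫ w = h) :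
    ReflectiveSet S :=
  reflectiveSet_of_forall_isReflectionArrow (exists_isReflectionArrow hweak hretr hwe)

end Paper
end
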